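/- arXiv:1110.2716 — 3 statements merged into one kernel-verified Lean document; each statement's English description precedes it below -/
import Mathlib

section
/- Let S be a t-signed set and S₀ an equivalence class of S under connectedness that satisfies the consistent-parity condition (all paths between two given elements have the same parity of length). Then for connected a, b ∈ S₀ and any K ⊆ [t], the path lengths pl_S(a,b) and pl_S(s(K,a,b), s(K,b,a)) have the same parity. -/
open MvPolynomial Finset

/-- The index set `N = [r 1] × ⋯ × [r n]`, realized as dependent functions. -/
abbrev Idx {n : ℕ} (r : Fin n → ℕ) := ∀ i, Fin (r i)

variable {n : ℕ} {r : Fin n → ℕ}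

/-- The switch `s(K,a,b)`: `b i` in the components of `K`, `a i` elsewhere. -/
def sw (K : Finset (Fin n)) (a b : Idx r) : Idx r := fun i => if i ∈ K then b i else a i

/-- The distance `d(a,b) = #{i : a i ≠ b i}`. -/
def hdist (a b : Idx r) : ℕ := (univ.filter fun i => a i ≠ b i).card

/-- The truncated distance `d_t(a,b) = #{i ∈ [t] : a i ≠ b i}`. -/
def hdistT (t : ℕ) (a b : Idx r) : ℕ :=
  (univ.filter fun i : Fin n => (i : ℕ) < t ∧ a i ≠ b i).card

/-- `c : ℕ → N` is a path of length `m` from `a` to `b` inside `S`: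
consecutive elements differ in exactly one component. -/
def IsPath (S : Set (Idx r)) (a b : Idx r) (m : ℕ) (c : ℕ → Idx r) : Prop :=
  c 0 = a ∧ c m = b ∧ (∀ j ≤ m, c j ∈ S) ∧ ∀ j < m, hdist (c j) (c (j + 1)) = 1

/-- `a` and `b` are connected in `S`. -/
def Connected (S : Set (Idx r)) (a b : Idx r) : Prop := ∃ m c, IsPath S a b m c

/-- The minimal path length `pl_S(a,b)`. -/
noncomputable def pl (S : Set (Idx r)) (a b : Idx r) : ℕ :=
  sInf {m | ∃ c, IsPath S a b m c}

/-- `S` is `t`-switchable. -/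
def Switchable (t : ℕ) (S : Set (Idx r)) : Prop :=
  ∀ a ∈ S, ∀ b ∈ S, hdist a b = 2 → ∀ i : Fin n, (i : ℕ) < t →
    sw {i} a b ∈ S ∧ sw {i} b a ∈ S

/-- `S` is `t`-signed: `t`-switchable, and each connectedness class satisfies one of:
constant first `t` coordinates, pairwise distance at most 1, or path-independent
parity of path lengths. -/
def Signed (t : ℕ) (S : Set (Idx r)) : Prop :=
  Switchable t S ∧
  ∀ a ∈ S,
    (∀ b c, Connected S a b → Connected S a c → ∀ i : Fin n, (i : ℕ) < t → b i = c i) ∨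
    (∀ b c, Connected S a b → Connected S a c → hdist b c ≤ 1) ∨
    (∀ b c, Connected S a b → Connected S a c →
      ∀ m m' p p', IsPath S b c m p → IsPath S b c m' p' → m % 2 = m' % 2)

variable (k : Type*) [Field k]

/-- The generalized determinant `f_{i,a,b}`. -/
noncomputable def fdet (i : Fin n) (a b : Idx r) : MvPolynomial (Idx r) k :=
  X a * X b - X (sw {i} a b) * X (sw {i} b a)

/-- The generalized permanent `g_{i,a,b}`. -/
noncomputable def gperm (i : Fin n) (a b : Idx r) : MvPolynomial (Idx r) k :=
  X a * X b + X (sw {i} a b) * X (sw {i} b a)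

/-- The binomial `h_{S,K,a,b}`. -/
noncomputable def hbin (S : Set (Idx r)) (K : Finset (Fin n)) (a b : Idx r) :
    MvPolynomial (Idx r) k :=
  X a * X b - (-1) ^ (K.card * (pl S a b - 1)) * (X (sw K a b) * X (sw K b a))

/-- The slice permanental ideal `J^⟨t⟩`. -/
noncomputable def Jt (t : ℕ) : Ideal (MvPolynomial (Idx r) k) :=
  Ideal.span {p | ∃ (a b : Idx r) (i : Fin n),
    hdist a b = 2 ∧ (i : ℕ) < t ∧ a i ≠ b i ∧ p = gperm k i a b}

/-- The ideal `J̃^⟨t⟩_S`. -/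
noncomputable def Jtilde (t : ℕ) (S : Set (Idx r)) : Ideal (MvPolynomial (Idx r) k) :=
  Ideal.span {p | ∃ (a b : Idx r) (i : Fin n),
    Connected S a b ∧ (i : ℕ) < t ∧ a i ≠ b i ∧ p = hbin k S {i} a b}

/-- The ideal `Var^⟨t⟩_S = (x_a : a ∉ S)`. -/
noncomputable def VarIdeal (S : Set (Idx r)) : Ideal (MvPolynomial (Idx r) k) :=
  Ideal.span {p | ∃ a ∉ S, p = X a}

/-- The ideal `Q^⟨t⟩_S = Var^⟨t⟩_S + J̃^⟨t⟩_S`. -/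
noncomputable def Qideal (t : ℕ) (S : Set (Idx r)) : Ideal (MvPolynomial (Idx r) k) :=
  VarIdeal k S + Jtilde k t S

/-- The ideal `Ĵ^⟨t⟩`. -/
noncomputable def Jhat (t : ℕ) : Ideal (MvPolynomial (Idx r) k) :=
  Ideal.span {p | ∃ (a b : Idx r) (i : Fin n),
    hdist a b = 3 ∧ hdistT t a b = 3 ∧ (i : ℕ) < t ∧ a i ≠ b i ∧ p = gperm k i a b}

/-- `S` is a maximal `t`-signed set. -/
noncomputable def MaximalSigned (t : ℕ) (S : Set (Idx r)) : Prop :=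
  Signed t S ∧ ∀ T : Set (Idx r), Signed t T → S ⊆ T → Qideal k t S ≤ Qideal k t T

/-! Switchability lets a single coordinate `i < t` be transported along any path: if
`x` and `y` differ only at `k ≠ i`, then `y` and `x[i ↦ v]` are at distance 2 and their
switch at `i` is `y[i ↦ v]`. Hence the coordinate-by-coordinate switches of `a` and `b`
stay in `S`, and `sw K a b`, `sw K b a` are reached from `a`, `b` by paths of the same
length. Joining these to a path from `a` to `b` gives a path from `sw K a b` to
`sw K b a` of length `≡ pl S a b`, and consistent parity turns this into the claim. -/

open Function

section Paths

variable {S : Set (Idx r)} {a b x y : Idx r}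

lemma hdist_comm (a b : Idx r) : hdist a b = hdist b a := by
  simp only [hdist, ne_comm]

lemma hdist_eq_card_of_forall (s : Finset (Fin n)) (h : ∀ j, x j ≠ y j ↔ j ∈ s) :
    hdist x y = s.card := by
  rw [hdist]
  congr 1
  ext j
  simp [h]

lemma exists_forall_ne_iff_of_hdist_eq_one (h : hdist x y = 1) :
    ∃ k, ∀ j, x j ≠ y j ↔ j = k := by
  obtain ⟨k, hk⟩ := Finset.card_eq_one.mp h
  exact ⟨k, fun j => by simpa using congrArg (j ∈ ·) hk⟩

lemma hdist_update_of_ne {i : Fin n} {v : Fin (r i)} (h : x i ≠ v) :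
    hdist x (update x i v) = 1 := by
  refine hdist_eq_card_of_forall {i} fun j => ?_
  by_cases hj : j = i
  · subst hj; simpa using h
  · simp [hj]

lemma sw_empty (a b : Idx r) : sw ∅ a b = a := by
  funext j; simp [sw]

lemma sw_insert {i : Fin n} {K : Finset (Fin n)} (hi : i ∉ K) (a b : Idx r) :
    sw (insert i K) a b = update (sw K a b) i (b i) := by
  funext j
  by_cases hj : j = i
  · subst hj; simp [sw]
  · simp [sw, hj]

lemma sw_singleton (i : Fin n) (a b : Idx r) : sw {i} a b = update a i (b i) := by
  rw [← insert_empty_eq, sw_insert (Finset.notMem_empty i), sw_empty]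

lemma sw_apply_of_notMem {i : Fin n} {K : Finset (Fin n)} (hi : i ∉ K) (a b : Idx r) :
    sw K a b i = a i := by
  simp [sw, hi]

lemma isPath_zero (ha : a ∈ S) : IsPath S a a 0 (fun _ => a) :=
  ⟨rfl, rfl, fun _ _ => ha, fun _ hj => absurd hj (Nat.not_lt_zero _)⟩

lemma isPath_one (ha : a ∈ S) (hb : b ∈ S) (h : hdist a b = 1) :
    IsPath S a b 1 (fun j => if j = 0 then a else b) := by
  refine ⟨rfl, rfl, fun j _ => ?_, fun j hj => ?_⟩ <;> dsimp only
  · split_ifs <;> assumption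
  · obtain rfl : j = 0 := by omega
    simpa using h

variable {m m' : ℕ} {c c' : ℕ → Idx r}

lemma IsPath.left_mem (h : IsPath S a b m c) : a ∈ S := h.1 ▸ h.2.2.1 0 m.zero_le

lemma IsPath.right_mem (h : IsPath S a b m c) : b ∈ S := h.2.1 ▸ h.2.2.1 m le_rfl

lemma IsPath.append (h : IsPath S a b m c) (h' : IsPath S b x m' c') :
    IsPath S a x (m + m') (fun j => if j ≤ m then c j else c' (j - m)) := by
  obtain ⟨h0, hm, hmem, hstep⟩ := h
  obtain ⟨h0', hm', hmem', hstep'⟩ := h'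
  refine ⟨by simp [h0], ?_, fun j _ => ?_, fun j hj => ?_⟩ <;> dsimp only
  · split_ifs with hle
    · obtain rfl : m' = 0 := by omega
      rw [Nat.add_zero, hm, ← h0', hm']
    · rw [Nat.add_sub_cancel_left, hm']
  · split_ifs with hle
    · exact hmem j hle
    · exact hmem' _ (by omega)
  · rcases lt_trichotomy j m with hlt | rfl | hgt
    · rw [if_pos hlt.le, if_pos hlt.nat_succ_le]
      exact hstep j hlt
    · rw [if_pos le_rfl, if_neg (by omega), Nat.add_sub_cancel_left, hm, ← h0']
      exact hstep' 0 (by omega)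
    · rw [if_neg (by omega), if_neg (by omega), Nat.sub_add_comm hgt.le]
      exact hstep' _ (by omega)

lemma IsPath.reverse (h : IsPath S a b m c) : IsPath S b a m (fun j => c (m - j)) := by
  obtain ⟨h0, hm, hmem, hstep⟩ := h
  refine ⟨by simp [hm], by simp [h0], fun j _ => hmem _ (by omega), fun j hj => ?_⟩
  dsimp only
  rw [hdist_comm, show m - j = m - (j + 1) + 1 by omega]
  exact hstep _ (by omega)

lemma IsPath.connected (h : IsPath S a b m c) : Connected S a b := ⟨m, c, h⟩

lemma Connected.left_mem (h : Connected S a b) : a ∈ S :=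
  let ⟨_, _, hc⟩ := h; hc.left_mem

lemma Connected.right_mem (h : Connected S a b) : b ∈ S :=
  let ⟨_, _, hc⟩ := h; hc.right_mem

lemma Connected.symm (h : Connected S a b) : Connected S b a :=
  let ⟨_, _, hc⟩ := h; hc.reverse.connected

lemma Connected.trans (h : Connected S a b) (h' : Connected S b x) : Connected S a x :=
  let ⟨_, _, hc⟩ := h; let ⟨_, _, hc'⟩ := h'; (hc.append hc').connected

lemma Connected.exists_isPath_pl (h : Connected S a b) : ∃ c, IsPath S a b (pl S a b) c :=
  Nat.sInf_mem (s := {m | ∃ c, IsPath S a b m c}) (let ⟨m, c, hc⟩ := h; ⟨m, c, hc⟩)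

lemma IsPath.induction {P : Idx r → Prop} (h : IsPath S a b m c) (ha : P a)
    (hstep : ∀ x ∈ S, ∀ y ∈ S, hdist x y = 1 → P x → P y) : P b := by
  obtain ⟨h0, hm, hmem, hstep'⟩ := h
  suffices ∀ j ≤ m, P (c j) from hm ▸ this m le_rfl
  intro j hj
  induction j with
  | zero => exact h0 ▸ ha
  | succ j ih =>
    exact hstep _ (hmem j (by omega)) _ (hmem _ hj) (hstep' j hj) (ih (by omega))

end Paths

section Switching

variable {t : ℕ} {S : Set (Idx r)} {a b x y : Idx r} {i : Fin n} {v : Fin (r i)}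

lemma Switchable.update_mem_of_hdist_eq_one (hS : Switchable t S) (hi : (i : ℕ) < t)
    (hy : y ∈ S) (hxy : hdist x y = 1) (hx : update x i v ∈ S) : update y i v ∈ S := by
  obtain ⟨k, hk⟩ := exists_forall_ne_iff_of_hdist_eq_one hxy
  have hxy_of_ne : ∀ j, j ≠ k → x j = y j := fun j hj => not_not.mp (mt (hk j).mp hj)
  by_cases hv : y i = v
  · rwa [← hv, update_eq_self]
  by_cases hki : k = i
  · subst hki
    convert hx using 1
    funext j
    by_cases hj : j = k
    · subst hj; simp
    · simp [hj, hxy_of_ne j hj]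
  · have hdist_two : hdist y (update x i v) = 2 := by
      rw [← Finset.card_pair hki]
      refine hdist_eq_card_of_forall _ fun j => ?_
      by_cases hj : j = i
      · subst hj; simp [hv]
      · simp [hj, ne_comm, hk j]
    simpa [sw_singleton] using (hS y hy _ hx hdist_two i hi).1

lemma Connected.update_mem (hS : Switchable t S) (hi : (i : ℕ) < t) (hxy : Connected S x y)
    (hx : update x i v ∈ S) : update y i v ∈ S :=
  let ⟨_, _, hc⟩ := hxy
  hc.induction hx fun _ _ _ hz hd h => hS.update_mem_of_hdist_eq_one hi hz hd h

lemma Connected.update_mem_of_apply_eq (hS : Switchable t S) (hi : (i : ℕ) < t)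
    (hxy : Connected S x y) (hx : x ∈ S) (hv : x i = v) : update y i v ∈ S :=
  hxy.update_mem hS hi (by rwa [← hv, update_eq_self])

lemma exists_isPath_sw (hS : Switchable t S) (hab : Connected S a b) (K : Finset (Fin n))
    (hK : ∀ i ∈ K, (i : ℕ) < t) :
    ∃ p, (∃ c, IsPath S a (sw K a b) p c) ∧ ∃ c, IsPath S b (sw K b a) p c := by
  induction K using Finset.induction_on with
  | empty =>
    rw [sw_empty, sw_empty]
    exact ⟨0, ⟨_, isPath_zero hab.left_mem⟩, ⟨_, isPath_zero hab.right_mem⟩⟩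
  | insert i K hiK ih =>
    obtain ⟨p, ⟨ca, hca⟩, ⟨cb, hcb⟩⟩ := ih fun j hj => hK j (Finset.mem_insert_of_mem hj)
    have hi := hK i (Finset.mem_insert_self i K)
    have hai := sw_apply_of_notMem hiK a b
    have hbi := sw_apply_of_notMem hiK b a
    rw [sw_insert hiK, sw_insert hiK]
    by_cases habi : a i = b i
    · rw [update_eq_self_iff.mpr (hai.trans habi).symm,
        update_eq_self_iff.mpr (hbi.trans habi.symm).symm]
      exact ⟨p, ⟨ca, hca⟩, ⟨cb, hcb⟩⟩
    have hconn : Connected S (sw K b a) (sw K a b) :=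
      hcb.connected.symm.trans (hab.symm.trans hca.connected)
    have ha' := hconn.update_mem_of_apply_eq hS hi hcb.right_mem hbi
    have hb' := hconn.symm.update_mem_of_apply_eq hS hi hca.right_mem hai
    exact ⟨p + 1,
      ⟨_, hca.append (isPath_one hca.right_mem ha' (hdist_update_of_ne (hai ▸ habi)))⟩,
      ⟨_, hcb.append (isPath_one hcb.right_mem hb' (hdist_update_of_ne (hbi ▸ Ne.symm habi)))⟩⟩

end Switching

def ConsistentParity (S : Set (Idx r)) (a : Idx r) : Prop :=
  ∀ c d, Connected S a c → Connected S a d →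
    ∀ m m' p p', IsPath S c d m p → IsPath S c d m' p' → m % 2 = m' % 2

lemma pl_mod_two_eq {S : Set (Idx r)} {a b a' b' : Idx r} {p q : ℕ} {ca cb : ℕ → Idx r}
    (hpar : ConsistentParity S a) (hab : Connected S a b) (ha : IsPath S a a' p ca)
    (hb : IsPath S b b' q cb) (hpq : p % 2 = q % 2) : pl S a b % 2 = pl S a' b' % 2 := by
  obtain ⟨c, hc⟩ := hab.exists_isPath_pl
  have hlong := (ha.reverse.append hc).append hb
  obtain ⟨c', hc'⟩ := hlong.connected.exists_isPath_pl
  have := hpar a' b' ha.connected (hab.trans hb.connected) _ _ _ _ hlong hc'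
  omega

/-- in a class with path-independent parity, `pl_S(a,b)` and
`pl_S(s(K,a,b), s(K,b,a))` have the same parity. -/
theorem stmt6 (t : ℕ) (S : Set (Idx r)) (hS : Signed t S) (a b : Idx r)
    (hab : Connected S a b)
    (hpar : ∀ c d, Connected S a c → Connected S a d →
      ∀ m m' p p', IsPath S c d m p → IsPath S c d m' p' → m % 2 = m' % 2)
    (K : Finset (Fin n)) (hK : ∀ i ∈ K, (i : ℕ) < t) :
    pl S a b % 2 = pl S (sw K a b) (sw K b a) % 2 := by
  obtain ⟨p, ⟨ca, hca⟩, ⟨cb, hcb⟩⟩ := exists_isPath_sw hS.1 hab K hK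
  exact pl_mod_two_eq hpar hab hca hcb rfl
end

section
/- Let S be a t-signed set and S₀ an equivalence class of S with respect to connectedness. Then either for all i ∈ [t] the set {a_i : a ∈ S₀} contains at most two elements, or else for all a, b ∈ S₀ one has d(a,b) ≤ 1. -/
/-! In the parity case, fix `i < t`. Switchability lets one move the `i`-th coordinate of `a₀`
to that of any `b` connected to it without leaving `S` (induct along a path, each step
switching across a pair at Hamming distance at most two). Three distinct values
`a₀ i, b i, e i` would then give the triangle `a₀, a₀[i ↦ b i], a₀[i ↦ e i]` in `S`, a closed
path of odd length, contradicting the parity condition. -/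

open MvPolynomial Finset

variable {n : ℕ} {r : Fin n → ℕ}

variable (k : Type*) [Field k]

theorem hdist_eq_hammingDist (a b : Idx r) : hdist a b = hammingDist a b := rfl

theorem sw_singleton_eq_update (i : Fin n) (a b : Idx r) :
    sw {i} a b = Function.update a i (b i) := by
  funext j
  by_cases h : j = i
  · subst h; simp [sw]
  · simp [sw, h]

section Hamming

variable {ι : Type*} [DecidableEq ι] [Fintype ι] {β : ι → Type*} [∀ i, DecidableEq (β i)]

theorem hammingDist_update_update (x : ∀ i, β i) (i : ι) {u v : β i} (huv : u ≠ v) :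
    hammingDist (Function.update x i u) (Function.update x i v) = 1 := by
  rw [hammingDist, Finset.card_eq_one]
  refine ⟨i, Finset.ext fun j => ?_⟩
  by_cases h : j = i
  · subst h; simpa using huv
  · simp [h]

theorem hammingDist_update_self_le (x : ∀ i, β i) (i : ι) (v : β i) :
    hammingDist x (Function.update x i v) ≤ 1 := by
  by_cases h : x i = v
  · simp [← h]
  · simpa using (hammingDist_update_update x i h).le

theorem update_eq_or_eq_of_hammingDist_le_one {x y : ∀ i, β i} (h : hammingDist x y ≤ 1)
    (i : ι) :
    Function.update x i (y i) = x ∨ Function.update x i (y i) = y := by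
  by_cases hi : x i = y i
  · exact Or.inl (by simp [← hi])
  refine Or.inr (funext fun j => ?_)
  by_cases hj : j = i
  · subst hj; simp
  rw [Function.update_of_ne hj]
  by_contra hxy
  have := (Finset.card_le_one.mp h) i (by simpa using hi) j (by simpa using hxy)
  exact hj this.symm

end Hamming

theorem Set.ncard_le_two_of_subsingleton_sdiff {α : Type*} {s : Set α} {x : α}
    (h : (s \ {x}).Subsingleton) : s.ncard ≤ 2 :=
  calc s.ncard ≤ (s \ {x}).ncard + ({x} : Set α).ncard := Set.ncard_le_ncard_sdiff_add_ncard _ _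
    _ ≤ 1 + 1 := by
      rw [Set.ncard_singleton]
      exact Nat.add_le_add_right ((Set.ncard_le_one h.finite).mpr h) 1

section Switchable

variable {t : ℕ} {S : Set (Idx r)}

theorem IsPath.tail {x y : Idx r} {m : ℕ} {c : ℕ → Idx r} (h : IsPath S x y (m + 1) c) :
    IsPath S (c 1) y m (fun j => c (j + 1)) :=
  ⟨rfl, h.2.1, fun j hj => h.2.2.1 (j + 1) (by omega), fun j hj => h.2.2.2 (j + 1) (by omega)⟩

theorem Switchable.update_mem_of_hammingDist_le_two (hsw : Switchable t S) {x y : Idx r}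
    (hx : x ∈ S) (hy : y ∈ S) (hxy : hammingDist x y ≤ 2) {i : Fin n} (hi : (i : ℕ) < t) :
    Function.update x i (y i) ∈ S := by
  rcases (show hammingDist x y ≤ 1 ∨ hammingDist x y = 2 by omega) with hle | htwo
  · rcases update_eq_or_eq_of_hammingDist_le_one hle i with h | h <;> rw [h] <;> assumption
  · rw [← sw_singleton_eq_update]
    exact (hsw x hx y hy ((hdist_eq_hammingDist x y).trans htwo) i hi).1

theorem Switchable.update_mem_of_isPath (hsw : Switchable t S) {i : Fin n} (hi : (i : ℕ) < t)
    {m : ℕ} : ∀ {x y : Idx r} {c : ℕ → Idx r}, IsPath S x y m c →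
      Function.update x i (y i) ∈ S := by
  induction m with
  | zero =>
    rintro x y c ⟨rfl, rfl, hmem, -⟩
    simpa using hmem 0 le_rfl
  | succ m ih =>
    intro x y c hc
    set z := Function.update (c 1) i (y i)
    have hz : z ∈ S := ih hc.tail
    obtain ⟨rfl, -, hmem, hstep⟩ := hc
    have hdist_le : hammingDist (c 0) z ≤ 2 :=
      calc hammingDist (c 0) z ≤ hammingDist (c 0) (c 1) + hammingDist (c 1) z :=
            hammingDist_triangle _ _ _
        _ ≤ 1 + 1 :=
          Nat.add_le_add ((hdist_eq_hammingDist _ _).symm.trans (hstep 0 (by omega))).le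
            (hammingDist_update_self_le _ _ _)
    simpa [z] using hsw.update_mem_of_hammingDist_le_two (hmem 0 (by omega)) hz hdist_le hi

theorem isPath_nil {a : Idx r} (ha : a ∈ S) : IsPath S a a 0 (fun _ => a) :=
  ⟨rfl, rfl, fun _ _ => ha, fun j h => absurd h (Nat.not_lt_zero j)⟩

theorem isPath_update_triangle {x : Idx r} {i : Fin n} {u v : Fin (r i)} (hx : x ∈ S)
    (hu : Function.update x i u ∈ S) (hv : Function.update x i v ∈ S)
    (hxu : x i ≠ u) (huv : u ≠ v) (hvx : v ≠ x i) :
    IsPath S x x 3 (fun j => if j = 1 then Function.update x i u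
      else if j = 2 then Function.update x i v else x) := by
  have hstep : ∀ {u v : Fin (r i)}, u ≠ v →
      hdist (Function.update x i u) (Function.update x i v) = 1 := fun huv =>
    (hdist_eq_hammingDist _ _).trans (hammingDist_update_update x i huv)
  refine ⟨rfl, rfl, fun j hj => ?_, fun j hj => ?_⟩
  · interval_cases j <;> simpa
  · interval_cases j
    · simpa using hstep hxu
    · simpa using hstep huv
    · simpa using hstep hvx

theorem Switchable.subsingleton_proj_sdiff_of_parity (hsw : Switchable t S) {a₀ : Idx r}
    (ha₀ : a₀ ∈ S)
    (hparity : ∀ b c, Connected S a₀ b → Connected S a₀ c →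
      ∀ m m' p p', IsPath S b c m p → IsPath S b c m' p' → m % 2 = m' % 2)
    {i : Fin n} (hi : (i : ℕ) < t) :
    ({v : Fin (r i) | ∃ b, Connected S a₀ b ∧ b i = v} \ {a₀ i}).Subsingleton := by
  rintro _ ⟨⟨b, ⟨mb, cb, hb⟩, rfl⟩, hba⟩ _ ⟨⟨e, ⟨me, ce, he⟩, rfl⟩, hea⟩
  by_contra hbe
  have ha₀a₀ : Connected S a₀ a₀ := ⟨0, _, isPath_nil ha₀⟩
  have htriangle := isPath_update_triangle ha₀ (hsw.update_mem_of_isPath hi hb)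
    (hsw.update_mem_of_isPath hi he) (Ne.symm hba) hbe hea
  exact absurd (hparity a₀ a₀ ha₀a₀ ha₀a₀ _ _ _ _ htriangle (isPath_nil ha₀)) (by decide)

end Switchable

/-- each class of a `t`-signed set either has all `[t]`-coordinate
projections of size at most two, or has pairwise distance at most one. -/
theorem stmt7 (t : ℕ) (S : Set (Idx r)) (hS : Signed t S) (a₀ : Idx r) (ha₀ : a₀ ∈ S) :
    (∀ i : Fin n, (i : ℕ) < t →
      Set.ncard {v : Fin (r i) | ∃ b, Connected S a₀ b ∧ b i = v} ≤ 2) ∨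
    (∀ b c, Connected S a₀ b → Connected S a₀ c → hdist b c ≤ 1) := by
  obtain ⟨hsw, hcls⟩ := hS
  rcases hcls a₀ ha₀ with hconst | hclose | hparity
  · refine Or.inl fun i hi => Set.ncard_le_two_of_subsingleton_sdiff (x := a₀ i) ?_
    refine (Set.subsingleton_singleton (a := a₀ i)).anti (Set.sdiff_subset.trans ?_)
    rintro _ ⟨b, hb, rfl⟩
    exact hconst b a₀ hb ⟨0, _, isPath_nil ha₀⟩ i hi
  · exact Or.inr hclose
  · exact Or.inl fun i hi =>
      Set.ncard_le_two_of_subsingleton_sdiff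
        (hsw.subsingleton_proj_sdiff_of_parity ha₀ hparity hi)
end

section
/- For each i = 1,…,n let S_i ⊆ [r_i], and suppose one of the following holds: (1) |S_1| = ⋯ = |S_t| = 1; (2) there exists i such that |S_j| = 1 for all j ≠ i; (3) |S_i| ≤ 2 for all i. Then S = S_1 × ⋯ × S_n is a t-signed set consisting of a single connectedness equivalence class. -/
open MvPolynomial Finset

variable {n : ℕ} {r : Fin n → ℕ}

variable (k : Type*) [Field k]

/-!
A box `∏ Tᵢ` is closed under every switch, and any two of its points are joined inside it by
changing the coordinates in which they differ one at a time. If the first `t` factors are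
singletons, the first `t` coordinates are constant on the box; if all factors but one are
singletons, two points of the box differ in at most one coordinate. If every factor has at
most two elements, then along a path each step changes the parity of the distance to the
starting point, so every path from `b` to `c` has length `≡ d(b, c) (mod 2)`.
-/

theorem Set.eq_or_eq_of_ncard_le_two {α : Type*} {s : Set α} {o x y : α} (hs : s.ncard ≤ 2)
    (ho : o ∈ s) (hx : x ∈ s) (hy : y ∈ s) (hxy : x ≠ y)
    (hfin : s.Finite := by toFinite_tac) :
    o = x ∨ o = y := by
  by_contra! h
  have hcard : ({o, x, y} : Set α).ncard = 3 :=
    Set.ncard_eq_three.mpr ⟨o, x, y, h.1, h.2, hxy, rfl⟩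
  have hle := Set.ncard_le_ncard (Set.insert_subset ho (Set.pair_subset hx hy)) hfin
  omega

section hdist

variable {a b : Idx r}

lemma hdist_eq_zero_iff : hdist a b = 0 ↔ a = b := by
  simp [hdist, Finset.filter_eq_empty_iff, funext_iff]

lemma hdist_sw_singleton {i : Fin n} (h : a i ≠ b i) : hdist a (sw {i} a b) = 1 := by
  rw [hdist, Finset.card_eq_one]
  refine ⟨i, Finset.ext fun j => ?_⟩
  rcases eq_or_ne j i with rfl | hj <;> simp [sw, *]

lemma hdist_sw_singleton_add_one {i : Fin n} (h : a i ≠ b i) :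
    hdist (sw {i} a b) b + 1 = hdist a b := by
  have herase : (univ.filter fun j => sw {i} a b j ≠ b j) =
      (univ.filter fun j => a j ≠ b j).erase i := by
    ext j
    rcases eq_or_ne j i with rfl | hj <;> simp [sw, *]
  rw [hdist, hdist, herase, Finset.card_erase_add_one (by simpa using h)]

lemma exists_of_hdist_eq_one (h : hdist a b = 1) :
    ∃ i, a i ≠ b i ∧ ∀ j ≠ i, a j = b j := by
  obtain ⟨i, hi⟩ := Finset.card_eq_one.mp h
  have hmem : ∀ j, a j ≠ b j ↔ j = i := fun j => by simpa using Finset.ext_iff.mp hi j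
  exact ⟨i, (hmem i).mpr rfl, fun j hj => not_not.mp (mt (hmem j).mp hj)⟩

lemma hdist_cast_eq_sum (a b : Idx r) :
    (hdist a b : ZMod 2) = ∑ i, if a i ≠ b i then 1 else 0 :=
  Finset.natCast_card_filter _ _

end hdist

section paths

variable {S : Set (Idx r)} {a a' b : Idx r}

lemma IsPath.cons {m : ℕ} {c : ℕ → Idx r} (ha : a ∈ S) (h : hdist a a' = 1)
    (hp : IsPath S a' b m c) : IsPath S a b (m + 1) (fun | 0 => a | j + 1 => c j) := by
  obtain ⟨hc0, hcm, hmem, hstep⟩ := hp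
  refine ⟨rfl, hcm, ?_, ?_⟩
  · rintro (_ | j) hj
    exacts [ha, hmem j (by omega)]
  · rintro (_ | j) hj
    exacts [(congrArg (hdist a) hc0).trans h, hstep j (by omega)]

lemma Connected.refl (ha : a ∈ S) : Connected S a a :=
  ⟨0, fun _ => a, rfl, rfl, fun _ _ => ha, fun _ h => absurd h (Nat.not_lt_zero _)⟩

lemma Connected.cons (ha : a ∈ S) (h : hdist a a' = 1) : Connected S a' b → Connected S a b :=
  fun ⟨_, _, hp⟩ => ⟨_, _, hp.cons ha h⟩

lemma Connected.mem_right : Connected S a b → b ∈ S :=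
  fun ⟨m, _, _, hcm, hmem, _⟩ => hcm ▸ hmem m le_rfl

end paths

def piBox (T : ∀ i : Fin n, Set (Fin (r i))) : Set (Idx r) := {a | ∀ i, a i ∈ T i}

section piBox

variable {T : ∀ i : Fin n, Set (Fin (r i))} {a b c : Idx r}

lemma sw_mem_piBox (ha : a ∈ piBox T) (hb : b ∈ piBox T) (K : Finset (Fin n)) :
    sw K a b ∈ piBox T :=
  fun i => by unfold sw; split_ifs; exacts [hb i, ha i]

lemma piBox_switchable (t : ℕ) (T : ∀ i : Fin n, Set (Fin (r i))) : Switchable t (piBox T) :=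
  fun _ ha _ hb _ _ _ => ⟨sw_mem_piBox ha hb _, sw_mem_piBox hb ha _⟩

lemma piBox_connected (ha : a ∈ piBox T) (hb : b ∈ piBox T) : Connected (piBox T) a b := by
  induction h : hdist a b generalizing a with
  | zero => rw [hdist_eq_zero_iff.mp h]; exact .refl hb
  | succ d ih =>
    obtain ⟨i, hi⟩ : ∃ i, a i ≠ b i := by
      by_contra! hab
      simp [funext hab, hdist_eq_zero_iff.mpr] at h
    have hd : hdist (sw {i} a b) b = d := by
      have := hdist_sw_singleton_add_one hi
      omega
    exact (ih (sw_mem_piBox ha hb _) hd).cons ha (hdist_sw_singleton hi)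

lemma apply_eq_of_mem_piBox_of_ncard_le_one {i : Fin n} (hi : (T i).ncard ≤ 1)
    (hb : b ∈ piBox T) (hc : c ∈ piBox T) : b i = c i :=
  (Set.ncard_le_one_iff).mp hi (hb i) (hc i)

lemma hdist_le_one_of_mem_piBox {i : Fin n} (hT : ∀ j ≠ i, (T j).ncard ≤ 1)
    (hb : b ∈ piBox T) (hc : c ∈ piBox T) : hdist b c ≤ 1 := by
  calc hdist b c ≤ ({i} : Finset (Fin n)).card := Finset.card_le_card fun j hj => by
        by_contra hji
        exact (Finset.mem_filter.mp hj).2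
          (apply_eq_of_mem_piBox_of_ncard_le_one (hT j (Finset.mem_singleton.not.mp hji)) hb hc)
    _ = 1 := Finset.card_singleton i

section parity

variable (hT : ∀ i, (T i).ncard ≤ 2)
include hT

lemma hdist_cast_succ_of_mem_piBox {o : Idx r} (ho : o ∈ piBox T) (hb : b ∈ piBox T)
    (hc : c ∈ piBox T) (hbc : hdist b c = 1) : (hdist o c : ZMod 2) = hdist o b + 1 := by
  obtain ⟨i, hi, hrest⟩ := exists_of_hdist_eq_one hbc
  have hrest_sum : ∑ j ∈ univ.erase i, (if o j ≠ c j then 1 else 0 : ZMod 2) =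
      ∑ j ∈ univ.erase i, if o j ≠ b j then 1 else 0 :=
    Finset.sum_congr rfl fun j hj => by rw [hrest j (Finset.ne_of_mem_erase hj)]
  simp only [hdist_cast_eq_sum, ← Finset.add_sum_erase _ _ (Finset.mem_univ i), hrest_sum]
  rcases Set.eq_or_eq_of_ncard_le_two (hT i) (ho i) (hb i) (hc i) hi with h | h
  · rw [if_pos (h ▸ hi), if_neg (not_not.mpr h), zero_add, add_comm]
  · rw [if_neg (not_not.mpr h), if_pos fun e => hi (e.symm.trans h), add_right_comm,
      show (1 + 1 : ZMod 2) = 0 from rfl]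

lemma IsPath.hdist_cast_eq {m : ℕ} {p : ℕ → Idx r} (hp : IsPath (piBox T) b c m p) :
    (hdist b c : ZMod 2) = m := by
  obtain ⟨hp0, hpm, hmem, hstep⟩ := hp
  have hb : b ∈ piBox T := hp0 ▸ hmem 0 (Nat.zero_le m)
  have key : ∀ j ≤ m, (hdist b (p j) : ZMod 2) = j := by
    intro j hj
    induction j with
    | zero => simp [← hp0, hdist_eq_zero_iff.mpr]
    | succ j ih =>
      rw [hdist_cast_succ_of_mem_piBox hT hb (hmem j (by omega)) (hmem (j + 1) hj) (hstep j hj),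
        ih (by omega), Nat.cast_succ]
  simpa [hpm] using key m le_rfl

end parity

theorem piBox_signed (t : ℕ)
    (hT : (∀ i : Fin n, (i : ℕ) < t → (T i).ncard = 1) ∨
      (∃ i : Fin n, ∀ j : Fin n, j ≠ i → (T j).ncard = 1) ∨
      (∀ i : Fin n, (T i).ncard ≤ 2)) :
    Signed t (piBox T) := by
  refine ⟨piBox_switchable t T, fun _ _ => ?_⟩
  rcases hT with h | ⟨i, h⟩ | h
  · exact .inl fun b c hb hc i hi =>
      apply_eq_of_mem_piBox_of_ncard_le_one (h i hi).le hb.mem_right hc.mem_right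
  · exact .inr <| .inl fun b c hb hc =>
      hdist_le_one_of_mem_piBox (fun j hj => (h j hj).le) hb.mem_right hc.mem_right
  · exact .inr <| .inr fun b c _ _ m m' p p' hp hp' =>
      (ZMod.natCast_eq_natCast_iff' m m' 2).mp
        ((hp.hdist_cast_eq h).symm.trans (hp'.hdist_cast_eq h))

end piBox

theorem stmt12_general (t : ℕ) (T : ∀ i : Fin n, Set (Fin (r i)))
    (hcond : (∀ i : Fin n, (i : ℕ) < t → (T i).ncard = 1) ∨
      (∃ i : Fin n, ∀ j : Fin n, j ≠ i → (T j).ncard = 1) ∨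
      (∀ i : Fin n, (T i).ncard ≤ 2)) :
    Signed t {a : Idx r | ∀ i, a i ∈ T i} ∧
    ∀ a ∈ {a : Idx r | ∀ i, a i ∈ T i}, ∀ b ∈ {a : Idx r | ∀ i, a i ∈ T i},
      Connected {a : Idx r | ∀ i, a i ∈ T i} a b :=
  ⟨piBox_signed t hcond, fun _ ha _ hb => piBox_connected ha hb⟩

/-- boxes of the indicated shapes are `t`-signed and connected. -/
theorem stmt12 (t : ℕ) (ht : t ≤ n) (T : ∀ i : Fin n, Set (Fin (r i)))
    (hcond : (∀ i : Fin n, (i : ℕ) < t → (T i).ncard = 1) ∨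
      (∃ i : Fin n, ∀ j : Fin n, j ≠ i → (T j).ncard = 1) ∨
      (∀ i : Fin n, (T i).ncard ≤ 2)) :
    Signed t {a : Idx r | ∀ i, a i ∈ T i} ∧
    ∀ a ∈ {a : Idx r | ∀ i, a i ∈ T i}, ∀ b ∈ {a : Idx r | ∀ i, a i ∈ T i},
      Connected {a : Idx r | ∀ i, a i ∈ T i} a b :=
  stmt12_general t T hcond
end
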